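/- arXiv:math/0109005 — 2 statements merged into one kernel-verified Lean document; each statement's English description precedes it below -/
import Mathlib

section
/- Assume the transformation laws θ(t/τ, -1/τ) = (1/i)√(τ/i) e^{πit²/τ} θ(t,τ) and θ(t,τ+1) = e^{πi/4} θ(t,τ), plus the analogous laws for the derivative θ'(0,·). Then for A = [[a,b],[c,d]] ∈ SL₂(ℤ), θ'(A(0,τ))/θ(A(t,τ)) = (cτ+d) e^{-πict²/(cτ+d)} · θ'(0,τ)/θ(t,τ), where θ'(A(0,τ)) means θ'(0, (aτ+b)/(cτ+d)). -/
open Complex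

/-- `c(q) = ∏_{k≥1} (1 - q^k)`. -/
noncomputable def jacobiCFactor (q : ℂ) : ℂ := ∏' k : ℕ, (1 - q ^ (k + 1))

/-- The Jacobi theta function
`θ(t,τ) = c(q) q^{1/8} · 2 sin(πt) · ∏_{k≥1}(1 - q^k e^{2πit})(1 - q^k e^{-2πit})`,
with `q = e^{2πiτ}` and `q^{1/8} = e^{πiτ/4}`. -/
noncomputable def jTheta (t τ : ℂ) : ℂ :=
  jacobiCFactor (exp (2 * Real.pi * I * τ)) * exp (Real.pi * I * τ / 4) *
    (2 * sin (Real.pi * t)) *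
    ∏' k : ℕ,
      ((1 - exp (2 * Real.pi * I * τ) ^ (k + 1) * exp (2 * Real.pi * I * t)) *
        (1 - exp (2 * Real.pi * I * τ) ^ (k + 1) * exp (-(2 * Real.pi * I * t))))

/-- The action of `A = [[a,b],[c,d]] ∈ SL₂(ℤ)` on `(t,τ) ∈ ℂ × H` by
`A(t,τ) = (t/(cτ+d), (aτ+b)/(cτ+d))`. -/
noncomputable def sl2Act (A : Matrix.SpecialLinearGroup (Fin 2) ℤ) (p : ℂ × ℂ) : ℂ × ℂ :=
  (p.1 / ((A.1 1 0 : ℂ) * p.2 + (A.1 1 1 : ℂ)),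
    ((A.1 0 0 : ℂ) * p.2 + (A.1 0 1 : ℂ)) / ((A.1 1 0 : ℂ) * p.2 + (A.1 1 1 : ℂ)))

/-- `θ'(0,τ)`, the `t`-derivative of the Jacobi theta function at `t = 0`. -/
noncomputable def jThetaDeriv (τ : ℂ) : ℂ := deriv (fun t : ℂ => jTheta t τ) 0

/-!
The ratio `θ'(0,τ)/θ(t,τ)` transforms under `S` and `T` with the factor
`j(A,(t,τ)) = (cτ+d) e^{-πict²/(cτ+d)}`. This factor is a cocycle for the action
`(t,τ) ↦ (t/(cτ+d), Aτ)` of `SL₂(ℤ)` on `ℂ × ℍ`, so the matrices under which the ratio transforms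
with factor `j` form a subgroup; it contains the generators `S` and `T`, hence is all of `SL₂(ℤ)`.
-/

open UpperHalfPlane hiding I
open ModularGroup
open scoped MatrixGroups

theorem Subgroup.eq_cocycle_mul_of_closure_eq_top {G X M : Type*} [Group G] [MulAction G X]
    [Monoid M] {j : G → X → M} (hj_one : ∀ x, j 1 x = 1)
    (hj_mul : ∀ g h x, j (g * h) x = j g (h • x) * j h x) {f : X → M} {s : Set G}
    (hs : Subgroup.closure s = ⊤) (hgen : ∀ g ∈ s, ∀ x, f (g • x) = j g x * f x) (g : G)
    (x : X) : f (g • x) = j g x * f x := by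
  have hg : g ∈ Subgroup.closure s := hs ▸ Subgroup.mem_top g
  induction hg using Subgroup.closure_induction generalizing x with
  | mem g hg => exact hgen g hg x
  | one => rw [one_smul, hj_one, one_mul]
  | mul g h _ _ ihg ihh => rw [mul_smul, ihg, ihh, hj_mul, mul_assoc]
  | inv g _ ih =>
    have hinv : j g⁻¹ x * j g (g⁻¹ • x) = 1 := by
      rw [← hj_one (g⁻¹ • x), ← inv_mul_cancel g, hj_mul, smul_inv_smul]
    calc f (g⁻¹ • x) = j g⁻¹ x * j g (g⁻¹ • x) * f (g⁻¹ • x) := by rw [hinv, one_mul]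
      _ = j g⁻¹ x * f x := by rw [mul_assoc, ← ih, smul_inv_smul]

namespace ModularGroup

lemma denom_eq_intCast (A : SL(2, ℤ)) (z : ℂ) : denom A z = (A 1 0 : ℂ) * z + A 1 1 := by
  simp [denom]

lemma coe_smul_eq_num_div_denom (A : SL(2, ℤ)) (τ : ℍ) :
    ((A • τ : ℍ) : ℂ) = num A τ / denom A τ := by
  rw [sl_moeb, coe_smul_of_det_pos (by simp)]

lemma denom_mul (A B : SL(2, ℤ)) (τ : ℍ) :
    denom (A * B : SL(2, ℤ)) τ = denom A (B • τ : ℍ) * denom B τ := by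
  rw [coe_smul_eq_num_div_denom, map_mul, map_mul]
  exact denom_cocycle _ _ τ.im_ne_zero

lemma mul_one_zero_mul_denom (A B : SL(2, ℤ)) (z : ℂ) :
    ((A * B) 1 0 : ℂ) * denom B z = A 1 0 + B 1 0 * denom (A * B : SL(2, ℤ)) z := by
  have hB : (B 0 0 * B 1 1 - B 0 1 * B 1 0 : ℂ) = 1 := by
    exact_mod_cast (Matrix.det_fin_two B.1).symm.trans B.2
  simp only [denom_eq_intCast, Matrix.SpecialLinearGroup.coe_mul, Matrix.mul_apply,
    Fin.sum_univ_two]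
  push_cast
  linear_combination (A 1 0 : ℂ) * hB

end ModularGroup

noncomputable instance jacobiAction : MulAction SL(2, ℤ) (ℂ × ℍ) where
  smul A p := (p.1 / denom A p.2, A • p.2)
  one_smul p := by
    change (p.1 / denom (1 : SL(2, ℤ)) p.2, (1 : SL(2, ℤ)) • p.2) = p
    rw [map_one, map_one, denom_one, div_one, one_smul]
  mul_smul A B p := by
    change (p.1 / _, (A * B) • p.2) = (p.1 / denom B p.2 / _, A • B • p.2)
    rw [denom_mul, mul_smul, div_div, mul_comm]
    rfl

lemma jacobiAction_smul (A : SL(2, ℤ)) (p : ℂ × ℍ) : A • p = (p.1 / denom A p.2, A • p.2) := rfl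

/-- The automorphy factor of Jacobi forms of weight `1` and index `-1/2`. -/
noncomputable def jacobiFactor (A : SL(2, ℤ)) (p : ℂ × ℍ) : ℂ :=
  denom A p.2 * exp (-(Real.pi * I) * A 1 0 * p.1 ^ 2 / denom A p.2)

lemma jacobiFactor_one (p : ℂ × ℍ) : jacobiFactor 1 p = 1 := by
  simp [jacobiFactor]

lemma jacobiFactor_mul (A B : SL(2, ℤ)) (p : ℂ × ℍ) :
    jacobiFactor (A * B) p = jacobiFactor A (B • p) * jacobiFactor B p := by
  obtain ⟨t, τ⟩ := p
  have hA := denom_ne_zero A (B • τ)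
  have hB := denom_ne_zero B τ
  have hc := mul_one_zero_mul_denom A B τ
  rw [denom_mul] at hc
  simp only [jacobiFactor, jacobiAction_smul, denom_mul]
  rw [mul_mul_mul_comm, ← exp_add]
  congr 2
  field_simp
  linear_combination (-t ^ 2) * hc

noncomputable def thetaRatio (p : ℂ × ℍ) : ℂ := jThetaDeriv p.2 / jTheta p.1 p.2

lemma thetaRatio_S_smul
    (hS : ∀ t τ : ℂ, 0 < τ.im →
      jTheta (t / τ) (-1 / τ)
        = 1 / I * (τ / I) ^ ((1 : ℂ) / 2) * exp (Real.pi * I * t ^ 2 / τ) * jTheta t τ)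
    (hS' : ∀ τ : ℂ, 0 < τ.im →
      jThetaDeriv (-1 / τ) = 1 / I * (τ / I) ^ ((1 : ℂ) / 2) * τ * jThetaDeriv τ)
    (p : ℂ × ℍ) : thetaRatio (S • p) = jacobiFactor S p * thetaRatio p := by
  obtain ⟨t, τ⟩ := p
  have hS_smul : ((S • τ : ℍ) : ℂ) = -1 / τ := by rw [modular_S_smul]; simp [neg_div]
  have hk : 1 / I * ((τ : ℂ) / I) ^ ((1 : ℂ) / 2) ≠ 0 := by
    simp [cpow_eq_zero_iff, τ.ne_zero]
  simp only [thetaRatio, jacobiFactor, jacobiAction_smul, denom_S, hS_smul, hS t τ τ.im_pos,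
    hS' τ τ.im_pos]
  rw [mul_div_mul_comm, mul_div_mul_left _ _ hk]
  simp [coe_S, div_eq_mul_inv, ← exp_neg]

lemma thetaRatio_T_smul
    (hT : ∀ t τ : ℂ, 0 < τ.im →
      jTheta t (τ + 1) = exp (Real.pi * I / 4) * jTheta t τ)
    (hT' : ∀ τ : ℂ, 0 < τ.im →
      jThetaDeriv (τ + 1) = exp (Real.pi * I / 4) * jThetaDeriv τ)
    (p : ℂ × ℍ) : thetaRatio (T • p) = jacobiFactor T p * thetaRatio p := by
  obtain ⟨t, τ⟩ := p
  have hT_smul : ((T • τ : ℍ) : ℂ) = τ + 1 := by rw [modular_T_smul]; simp [add_comm]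
  have hdenom : denom T τ = 1 := by simp [denom_eq_intCast, coe_T]
  simp only [thetaRatio, jacobiFactor, jacobiAction_smul, hdenom, hT_smul, div_one]
  rw [hT t τ τ.im_pos, hT' τ τ.im_pos, mul_div_mul_left _ _ (exp_ne_zero _)]
  simp [coe_T]

lemma sl2Act_eq_jacobiAction (A : SL(2, ℤ)) (t : ℂ) (τ : ℍ) :
    sl2Act A (t, τ) = ((A • (t, τ)).1, ((A • (t, τ)).2 : ℂ)) := by
  rw [jacobiAction_smul, coe_specialLinearGroup_apply]
  simp [sl2Act, denom_eq_intCast]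

theorem jTheta_deriv_ratio_modular_general
    (hS : ∀ t τ : ℂ, 0 < τ.im →
      jTheta (t / τ) (-1 / τ)
        = 1 / I * (τ / I) ^ ((1 : ℂ) / 2) * exp (Real.pi * I * t ^ 2 / τ) * jTheta t τ)
    (hT : ∀ t τ : ℂ, 0 < τ.im →
      jTheta t (τ + 1) = exp (Real.pi * I / 4) * jTheta t τ)
    (hS' : ∀ τ : ℂ, 0 < τ.im →
      jThetaDeriv (-1 / τ) = 1 / I * (τ / I) ^ ((1 : ℂ) / 2) * τ * jThetaDeriv τ)
    (hT' : ∀ τ : ℂ, 0 < τ.im →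
      jThetaDeriv (τ + 1) = exp (Real.pi * I / 4) * jThetaDeriv τ)
    (A : Matrix.SpecialLinearGroup (Fin 2) ℤ) (t τ : ℂ) (hτ : 0 < τ.im) :
    jThetaDeriv (sl2Act A (t, τ)).2 / jTheta (sl2Act A (t, τ)).1 (sl2Act A (t, τ)).2
      = ((A.1 1 0 : ℂ) * τ + (A.1 1 1 : ℂ))
          * exp (-(Real.pi * I) * (A.1 1 0 : ℂ) * t ^ 2
              / ((A.1 1 0 : ℂ) * τ + (A.1 1 1 : ℂ)))
          * (jThetaDeriv τ / jTheta t τ) := by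
  have hgen : ∀ g ∈ ({S, T} : Set SL(2, ℤ)), ∀ p,
      thetaRatio (g • p) = jacobiFactor g p * thetaRatio p := by
    rintro g (rfl | rfl)
    exacts [thetaRatio_S_smul hS hS', thetaRatio_T_smul hT hT']
  have key := Subgroup.eq_cocycle_mul_of_closure_eq_top jacobiFactor_one jacobiFactor_mul
    SpecialLinearGroup.SL2Z_generators hgen A (t, ⟨τ, hτ⟩)
  rw [sl2Act_eq_jacobiAction A t ⟨τ, hτ⟩]
  simpa [thetaRatio, jacobiFactor, denom_eq_intCast] using key

/-- Given the modular transformation laws for `θ` and for `θ'(0,·)` under the generators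
`S` and `T` of `SL₂(ℤ)`, for any `A = [[a,b],[c,d]] ∈ SL₂(ℤ)` one has
`θ'(A(0,τ))/θ(A(t,τ)) = (cτ+d) e^{-πict²/(cτ+d)} θ'(0,τ)/θ(t,τ)`. -/
theorem jTheta_deriv_ratio_modular
    (hS : ∀ t τ : ℂ, 0 < τ.im →
      jTheta (t / τ) (-1 / τ)
        = 1 / I * (τ / I) ^ ((1 : ℂ) / 2) * exp (Real.pi * I * t ^ 2 / τ) * jTheta t τ)
    (hT : ∀ t τ : ℂ, 0 < τ.im →
      jTheta t (τ + 1) = exp (Real.pi * I / 4) * jTheta t τ)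
    (hS' : ∀ τ : ℂ, 0 < τ.im →
      jThetaDeriv (-1 / τ) = 1 / I * (τ / I) ^ ((1 : ℂ) / 2) * τ * jThetaDeriv τ)
    (hT' : ∀ τ : ℂ, 0 < τ.im →
      jThetaDeriv (τ + 1) = exp (Real.pi * I / 4) * jThetaDeriv τ)
    (A : Matrix.SpecialLinearGroup (Fin 2) ℤ) (t τ : ℂ) (hτ : 0 < τ.im)
    (h : jTheta t τ ≠ 0)
    (h' : jTheta (sl2Act A (t, τ)).1 (sl2Act A (t, τ)).2 ≠ 0) :
    jThetaDeriv (sl2Act A (t, τ)).2 / jTheta (sl2Act A (t, τ)).1 (sl2Act A (t, τ)).2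
      = ((A.1 1 0 : ℂ) * τ + (A.1 1 1 : ℂ))
          * exp (-(Real.pi * I) * (A.1 1 0 : ℂ) * t ^ 2
              / ((A.1 1 0 : ℂ) * τ + (A.1 1 1 : ℂ)))
          * (jThetaDeriv τ / jTheta t τ) :=
  jTheta_deriv_ratio_modular_general hS hT hS' hT' A t τ hτ
end

section
/- Suppose F(t,τ) is a meromorphic function on ℂ × H such that for every A = [[a,b],[c,d]] ∈ SL₂(ℤ), the function F^A(t,τ) := (cτ+d)^{-l} e^{-πicnt²/(cτ+d)} F(t/(cτ+d), (aτ+b)/(cτ+d)) is holomorphic in (t,τ) for (t,τ) ∈ ℝ × H, and suppose the possible polar divisors of F in ℂ × H are all of the form t = (k/j)(cτ+d) with k, c, d, j integers, (c,d) = 1. Then F(t,τ) is holomorphic on ℝ × H and has no poles at all on lines t = (k/j)(cτ+d): indeed, for any such candidate polar divisor, choosing integers a, b with ad - bc = 1 and applying A = [[d,-b],[-c,a]] transforms the divisor t = (k/j)(cτ+d) into the divisor t = k/j in the new coordinates, contradicting holomorphicity of F^A on ℝ × H. -/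
/-!
The twisted pullback satisfies the cocycle identity `(F^{A⁻¹})^A = F` on `ℂ × H`, so `F` is
analytic at `p` as soon as `F^{A⁻¹}` is analytic at `A p`. A candidate pole `p` on the divisor
`t = (k/j)(cτ + d)` is sent by any `A ∈ SL₂(ℤ)` with bottom row `(c, d)` to a point with real first
coordinate `k/j`, where `F^{A⁻¹}` is analytic by hypothesis.
-/

open Complex

/-- The twisted pullback `F^A(t,τ) = (cτ+d)^{-l} e^{-πicnt²/(cτ+d)} F(A(t,τ))`. -/
noncomputable def twistedPullback (l : ℕ) (n : ℤ) (F : ℂ × ℂ → ℂ)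
    (A : Matrix.SpecialLinearGroup (Fin 2) ℤ) (p : ℂ × ℂ) : ℂ :=
  ((A.1 1 0 : ℂ) * p.2 + (A.1 1 1 : ℂ)) ^ (-(l : ℤ)) *
    exp (-(Real.pi * I) * (A.1 1 0 : ℂ) * (n : ℂ) * p.1 ^ 2
        / ((A.1 1 0 : ℂ) * p.2 + (A.1 1 1 : ℂ))) *
    F (sl2Act A p)

open scoped MatrixGroups

noncomputable def sl2Denom (A : SL(2, ℤ)) (τ : ℂ) : ℂ := (A.1 1 0 : ℂ) * τ + (A.1 1 1 : ℂ)

lemma sl2Denom_ne_zero (A : SL(2, ℤ)) {τ : ℂ} (hτ : 0 < τ.im) : sl2Denom A τ ≠ 0 := by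
  simpa [UpperHalfPlane.denom, sl2Denom] using
    UpperHalfPlane.denom_ne_zero_of_im (Matrix.SpecialLinearGroup.mapGL ℝ A) hτ.ne'

lemma sl2Act_apply (A : SL(2, ℤ)) (p : ℂ × ℂ) :
    sl2Act A p = (p.1 / sl2Denom A p.2,
      ((A.1 0 0 : ℂ) * p.2 + (A.1 0 1 : ℂ)) / sl2Denom A p.2) := rfl

lemma twistedPullback_apply (l : ℕ) (n : ℤ) (F : ℂ × ℂ → ℂ) (A : SL(2, ℤ)) (p : ℂ × ℂ) :
    twistedPullback l n F A p = sl2Denom A p.2 ^ (-(l : ℤ)) *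
      exp (-(Real.pi * I) * (A.1 1 0 : ℂ) * n * p.1 ^ 2 / sl2Denom A p.2) * F (sl2Act A p) := rfl

lemma sl2Act_snd_im_pos (A : SL(2, ℤ)) {p : ℂ × ℂ} (hp : 0 < p.2.im) :
    0 < (sl2Act A p).2.im := by
  have h := (A • (⟨p.2, hp⟩ : UpperHalfPlane)).im_pos
  rw [← UpperHalfPlane.coe_im, UpperHalfPlane.coe_specialLinearGroup_apply] at h
  simpa [sl2Act] using h

lemma intCast_det_sl2 {R : Type*} [CommRing R] (A : SL(2, ℤ)) :
    (A.1 0 0 : R) * A.1 1 1 - A.1 0 1 * A.1 1 0 = 1 := by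
  have h := congrArg (Int.cast : ℤ → R) A.2
  rwa [Matrix.det_fin_two, Int.cast_sub, Int.cast_mul, Int.cast_mul, Int.cast_one] at h

lemma sl2Denom_inv_sl2Act (A : SL(2, ℤ)) {p : ℂ × ℂ} (hp : 0 < p.2.im) :
    sl2Denom A⁻¹ (sl2Act A p).2 = (sl2Denom A p.2)⁻¹ := by
  have hD := sl2Denom_ne_zero A hp
  simp only [sl2Denom, sl2Act_apply, Matrix.SpecialLinearGroup.SL2_inv_expl, Fin.isValue,
    Matrix.cons_val', Matrix.cons_val_zero, Matrix.cons_val_fin_one, Matrix.cons_val_one,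
    Int.cast_neg, neg_mul] at hD ⊢
  field_simp
  linear_combination intCast_det_sl2 (R := ℂ) A

lemma sl2Act_inv_sl2Act (A : SL(2, ℤ)) {p : ℂ × ℂ} (hp : 0 < p.2.im) :
    sl2Act A⁻¹ (sl2Act A p) = p := by
  have hD := sl2Denom_ne_zero A hp
  rw [sl2Act_apply A⁻¹, sl2Denom_inv_sl2Act A hp]
  simp only [sl2Act_apply, Matrix.SpecialLinearGroup.SL2_inv_expl, Fin.isValue,
    Matrix.cons_val', Matrix.cons_val_zero, Matrix.cons_val_fin_one, Matrix.cons_val_one,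
    Int.cast_neg, div_inv_eq_mul]
  ext
  · field_simp
  · field_simp
    simp only [sl2Denom] at hD ⊢
    linear_combination p.2 * intCast_det_sl2 (R := ℂ) A

lemma twistedPullback_twistedPullback_inv (l : ℕ) (n : ℤ) (F : ℂ × ℂ → ℂ) (A : SL(2, ℤ))
    {p : ℂ × ℂ} (hp : 0 < p.2.im) :
    twistedPullback l n (twistedPullback l n F A⁻¹) A p = F p := by
  have hD := sl2Denom_ne_zero A hp
  have h10 : ((A⁻¹).1 1 0 : ℂ) = -A.1 1 0 := by simp [Matrix.SpecialLinearGroup.SL2_inv_expl]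
  have hsq : (sl2Act A p).1 ^ 2 / (sl2Denom A p.2)⁻¹ = p.1 ^ 2 / sl2Denom A p.2 := by
    rw [sl2Act_apply]; field_simp
  rw [twistedPullback_apply, twistedPullback_apply, sl2Denom_inv_sl2Act A hp,
    sl2Act_inv_sl2Act A hp, h10, mul_div_assoc _ ((sl2Act A p).1 ^ 2), hsq, inv_zpow', neg_neg,
    mul_div_assoc, zpow_neg, zpow_natCast]
  simp only [neg_mul, mul_neg, neg_neg, Complex.exp_neg]
  field_simp

lemma analyticAt_sl2Denom (A : SL(2, ℤ)) (p : ℂ × ℂ) :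
    AnalyticAt ℂ (fun q : ℂ × ℂ => sl2Denom A q.2) p :=
  (analyticAt_const.mul analyticAt_snd).add analyticAt_const

lemma analyticAt_sl2Act (A : SL(2, ℤ)) {p : ℂ × ℂ} (hp : 0 < p.2.im) :
    AnalyticAt ℂ (sl2Act A) p := by
  have hD := sl2Denom_ne_zero A hp
  exact (analyticAt_fst.div (analyticAt_sl2Denom A p) hD).prod
    (((analyticAt_const.mul analyticAt_snd).add analyticAt_const).div
      (analyticAt_sl2Denom A p) hD)

lemma AnalyticAt.twistedPullback {l : ℕ} {n : ℤ} {G : ℂ × ℂ → ℂ} (A : SL(2, ℤ))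
    {p : ℂ × ℂ} (hp : 0 < p.2.im) (hG : AnalyticAt ℂ G (sl2Act A p)) :
    AnalyticAt ℂ (twistedPullback l n G A) p := by
  have hD := sl2Denom_ne_zero A hp
  refine (((analyticAt_sl2Denom A p).zpow hD).mul ?_).mul (hG.comp (analyticAt_sl2Act A hp))
  exact ((analyticAt_const.mul (analyticAt_fst.pow 2)).div (analyticAt_sl2Denom A p) hD).cexp

lemma analyticAt_of_analyticAt_twistedPullback_inv {l : ℕ} {n : ℤ} {F : ℂ × ℂ → ℂ}
    (A : SL(2, ℤ)) {p : ℂ × ℂ} (hp : 0 < p.2.im)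
    (h : AnalyticAt ℂ (twistedPullback l n F A⁻¹) (sl2Act A p)) : AnalyticAt ℂ F p := by
  refine (h.twistedPullback (l := l) (n := n) A hp).congr ?_
  have hU : IsOpen {q : ℂ × ℂ | 0 < q.2.im} := isOpen_lt continuous_const (by fun_prop)
  filter_upwards [hU.mem_nhds hp] with q hq
  exact twistedPullback_twistedPullback_inv l n F A hq

lemma exists_sl2Act_fst_eq {c d : ℤ} (hcd : IsCoprime c d) {z : ℂ} {p : ℂ × ℂ}
    (hp : 0 < p.2.im) (hz : p.1 = z * (c * p.2 + d)) : ∃ A : SL(2, ℤ), (sl2Act A p).1 = z := by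
  obtain ⟨A, -, hA⟩ := ModularGroup.bottom_row_surj (R := ℤ) (show ![c, d] ∈ _ from hcd)
  have hc : A.1 1 0 = c := congrFun hA 0
  have hd : A.1 1 1 = d := congrFun hA 1
  refine ⟨A, ?_⟩
  have hD := sl2Denom_ne_zero A hp
  rw [sl2Act_apply, hz]
  simp only [sl2Denom, hc, hd] at hD ⊢
  field_simp

/-- Rigidity lemma: if `F` is a meromorphic function on `ℂ × H` such that for every
`A ∈ SL₂(ℤ)` the twisted pullback `F^A` is holomorphic at all points of `ℝ × H`, and the
only possible singular points of `F` lie on divisors `t = (k/j)(cτ+d)` with `k,j,c,d`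
integers, `j ≠ 0`, `(c,d) = 1`, then `F` is holomorphic on `ℝ × H` and in fact has no
singularities at all on `ℂ × H`. -/
theorem rigidity_no_poles (l : ℕ) (n : ℤ) (F : ℂ × ℂ → ℂ)
    (hhol : ∀ A : Matrix.SpecialLinearGroup (Fin 2) ℤ, ∀ (t : ℝ) (τ : ℂ), 0 < τ.im →
      AnalyticAt ℂ (twistedPullback l n F A) ((t : ℂ), τ))
    (hpolar : ∀ p : ℂ × ℂ, 0 < p.2.im → ¬ AnalyticAt ℂ F p →
      ∃ k j c d : ℤ, j ≠ 0 ∧ IsCoprime c d ∧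
        p.1 = ((k : ℂ) / (j : ℂ)) * ((c : ℂ) * p.2 + (d : ℂ))) :
    (∀ (t : ℝ) (τ : ℂ), 0 < τ.im → AnalyticAt ℂ F ((t : ℂ), τ)) ∧
    (∀ p : ℂ × ℂ, 0 < p.2.im → AnalyticAt ℂ F p) := by
  have hF : ∀ p : ℂ × ℂ, 0 < p.2.im → AnalyticAt ℂ F p := by
    intro p hp
    by_contra hpole
    obtain ⟨k, j, c, d, -, hcd, hdiv⟩ := hpolar p hp hpole
    obtain ⟨A, hA⟩ := exists_sl2Act_fst_eq hcd hp hdiv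
    refine hpole (analyticAt_of_analyticAt_twistedPullback_inv (l := l) (n := n) A hp ?_)
    have hreal : (sl2Act A p).1 = ((k / j : ℝ) : ℂ) := by rw [hA]; push_cast; rfl
    simpa [← hreal] using hhol A⁻¹ (k / j) (sl2Act A p).2 (sl2Act_snd_im_pos A hp)
  exact ⟨fun t τ hτ => hF _ hτ, hF⟩
end
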